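/- For every integer n ≥ 2, the Cartesian product digraph C_n □ C_n of the directed n-cycle with itself can be decomposed into two arc-disjoint Hamiltonian cycles. -/

import Mathlib

/-- A digraph (given by its arc relation) is strong (strongly connected). -/
def IsStrong {V : Type*} (A : V → V → Prop) : Prop :=
  ∀ x y : V, Relation.ReflTransGen A x y

/-- `A` has a pair of arc-disjoint strong spanning subdigraphs (a good decomposition). -/
def GoodDecomp {V : Type*} (A : V → V → Prop) : Prop :=
  ∃ A₁ A₂ : V → V → Prop,
    (∀ x y, A₁ x y → A x y) ∧ (∀ x y, A₂ x y → A x y) ∧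
    (∀ x y, ¬ (A₁ x y ∧ A₂ x y)) ∧ IsStrong A₁ ∧ IsStrong A₂

/-- Arc relation of the composition `T[H_1, ..., H_t]`. -/
def CompArc {t : ℕ} {Vt : Fin t → Type*} (T : Fin t → Fin t → Prop)
    (H : ∀ i, Vt i → Vt i → Prop) : (Σ i, Vt i) → (Σ i, Vt i) → Prop :=
  fun a b => T a.1 b.1 ∨ ∃ h : a.1 = b.1, H b.1 (h ▸ a.2) b.2


/-- The cyclic successor on `Fin n`. -/
def finSucc {n : ℕ} (x : Fin n) : Fin n := ⟨(x.val + 1) % n, Nat.mod_lt _ x.pos⟩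

def Semicomplete {V : Type*} (A : V → V → Prop) : Prop :=
  ∀ x y : V, x ≠ y → A x y ∨ A y x

/-- `A` is 2-arc-strong: it stays strong after deleting any set of at most one arc. -/
def TwoArcStrong {V : Type*} (A : V → V → Prop) : Prop :=
  ∀ X : Set (V × V), X.Subsingleton → IsStrong (fun x y => A x y ∧ (x, y) ∉ X)

/-- Digraph isomorphism. -/
def DIso {V W : Type*} (A : V → V → Prop) (B : W → W → Prop) : Prop :=
  ∃ e : V ≃ W, ∀ x y, A x y ↔ B (e x) (e y)

/-- Arc relation of the directed cycle on `n` vertices. -/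
def CycleArc (n : ℕ) : Fin n → Fin n → Prop := fun x y => y = finSucc x

/-- `T` (on `Fin t`) has a Hamiltonian cycle. -/
def HasHamCycle {t : ℕ} (T : Fin t → Fin t → Prop) : Prop :=
  ∃ e : Equiv.Perm (Fin t), ∀ i, T (e i) (e (finSucc i))

/-- Cartesian product of digraphs. -/
def CartProd {V W : Type*} (A : V → V → Prop) (B : W → W → Prop) :
    V × W → V × W → Prop :=
  fun p q => (A p.1 q.1 ∧ p.2 = q.2) ∨ (p.1 = q.1 ∧ B p.2 q.2)

/-- Strong product of digraphs. -/
def StrongProd {V W : Type*} (A : V → V → Prop) (B : W → W → Prop) :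
    V × W → V × W → Prop :=
  fun p q => (A p.1 q.1 ∧ p.2 = q.2) ∨ (p.1 = q.1 ∧ B p.2 q.2) ∨ (A p.1 q.1 ∧ B p.2 q.2)

/-- Lexicographic product of digraphs. -/
def LexProd {V W : Type*} (A : V → V → Prop) (B : W → W → Prop) :
    V × W → V × W → Prop :=
  fun p q => A p.1 q.1 ∨ (p.1 = q.1 ∧ B p.2 q.2)

/-- `k`-th Cartesian power of a digraph. -/
def CartPow {V : Type*} (A : V → V → Prop) (k : ℕ) :
    (Fin k → V) → (Fin k → V) → Prop :=
  fun f g => ∃ i, A (f i) (g i) ∧ ∀ j, j ≠ i → f j = g j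

/-- `A` has a collection of pairwise arc-disjoint directed cycles covering all vertices. -/
def HasCycleCover {V : Type*} (A : V → V → Prop) : Prop :=
  ∃ (k : ℕ) (m : Fin k → ℕ) (c : ∀ i : Fin k, Fin (m i) → V),
    (∀ i, 2 ≤ m i) ∧ (∀ i, Function.Injective (c i)) ∧
    (∀ i x, A (c i x) (c i (finSucc x))) ∧
    (∀ i j x y, c i x = c j y → c i (finSucc x) = c j (finSucc y) → i = j) ∧
    (∀ v : V, ∃ i x, c i x = v)

/-- The digraph `C3[K2bar, K2bar, K2bar]`. -/
def Exc1 : Fin 3 × Fin 2 → Fin 3 × Fin 2 → Prop := fun p q => q.1 = finSucc p.1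

/-- The digraph `C3[P2, K2bar, K2bar]`, the single arc of `P2` being `(0,0) → (0,1)`. -/
def Exc2 : Fin 3 × Fin 2 → Fin 3 × Fin 2 → Prop :=
  fun p q => q.1 = finSucc p.1 ∨ (p.1 = 0 ∧ q.1 = 0 ∧ p.2 = 0 ∧ q.2 = 1)

/-- Block index for `C3[K2bar, K2bar, K3bar]`. -/
def blk : (Fin 2 ⊕ Fin 2 ⊕ Fin 3) → Fin 3 :=
  Sum.elim (fun _ => 0) (Sum.elim (fun _ => 1) (fun _ => 2))

/-- The digraph `C3[K2bar, K2bar, K3bar]`. -/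
def Exc3 : (Fin 2 ⊕ Fin 2 ⊕ Fin 3) → (Fin 2 ⊕ Fin 2 ⊕ Fin 3) → Prop :=
  fun p q => blk q = finSucc (blk p)

/-- `S4`: the complete digraph on 4 vertices minus the directed 4-cycle `x → x+1`. -/
def S4Arc : Fin 4 → Fin 4 → Prop := fun x y => x ≠ y ∧ y ≠ finSucc x

/-!
The first cycle follows the arc `(a, b) → (a, b + 1)`, except on the antidiagonal `a + b = 0`,
where it takes `(a, b) → (a + 1, b)` instead; the remaining arcs of `C_n □ C_n` form its mirror
image under `(a, b) ↦ (b, a)`. Every step raises `a + b` by one, and `a` grows exactly when the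
antidiagonal is left. In the coordinates `(a, a + b - 1)` the first cycle is therefore the
odometer on `Fin n × Fin n`, i.e. the successor map of `Fin (n * n)` read in base `n`, so it
passes through all `n²` vertices; hence so does its mirror image.
-/

lemma finSucc_eq_add_one {n : ℕ} [NeZero n] (x : Fin n) : finSucc x = x + 1 :=
  Fin.ext (by simp [finSucc, Fin.val_add])

lemma Fin.add_one_ne_self {n : ℕ} [NeZero n] (hn : 2 ≤ n) (a : Fin n) : a + 1 ≠ a := by
  rw [Ne, add_eq_left, Fin.ext_iff, Fin.val_one', Nat.mod_eq_of_lt hn]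
  simp

lemma finSucc_finProdFinEquiv {m n : ℕ} [NeZero n] (a : Fin m) (r : Fin n) :
    finSucc (finProdFinEquiv (a, r)) =
      finProdFinEquiv (if finSucc r = 0 then finSucc a else a, finSucc r) := by
  have ha := a.isLt
  apply Fin.ext
  simp only [finSucc, finProdFinEquiv_apply_val, Fin.ext_iff, Fin.val_zero]
  rcases Nat.lt_or_ge (r.val + 1) n with hr | hr
  · have hlt : r.val + n * a.val + 1 < m * n := by nlinarith
    rw [Nat.mod_eq_of_lt hlt, Nat.mod_eq_of_lt hr, if_neg (by omega)]
    ring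
  · have hr : r.val + 1 = n := by omega
    rw [hr, Nat.mod_self, if_pos rfl, show r.val + n * a.val + 1 = n * (a.val + 1) by linarith,
      mul_comm m n, Nat.mul_mod_mul_left, zero_add]

lemma Function.Semiconj.eq_apply_iff_eq_finSucc {N : ℕ} {V : Type*} {e : Fin N ≃ V}
    {f : V → V} (h : Function.Semiconj e finSucc f) (x y : Fin N) :
    e y = f (e x) ↔ y = finSucc x := by
  rw [← h, e.apply_eq_iff_eq]

namespace StairCycle

variable {n : ℕ} [NeZero n]

def stairSucc (p : Fin n × Fin n) : Fin n × Fin n :=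
  if p.1 + p.2 = 0 then (p.1 + 1, p.2) else (p.1, p.2 + 1)

def shear : Fin n × Fin n ≃ Fin n × Fin n where
  toFun p := (p.1, p.2 + 1 - p.1)
  invFun p := (p.1, p.1 + p.2 - 1)
  left_inv p := Prod.ext rfl (by dsimp only; abel)
  right_inv p := Prod.ext rfl (by dsimp only; abel)

lemma stairSucc_shear (a r : Fin n) :
    stairSucc (shear (a, r)) = shear (if r + 1 = 0 then a + 1 else a, r + 1) := by
  have hsum : a + (r + 1 - a) = r + 1 := by abel
  simp only [stairSucc, shear, Equiv.coe_fn_mk, hsum]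
  split_ifs <;> refine Prod.ext rfl ?_ <;> dsimp only <;> abel

def stairCycle : Fin (n * n) ≃ Fin n × Fin n :=
  finProdFinEquiv.symm.trans shear

lemma semiconj_stairCycle : Function.Semiconj (stairCycle (n := n)) finSucc stairSucc := by
  intro t
  obtain ⟨⟨a, r⟩, rfl⟩ := finProdFinEquiv.surjective t
  simp only [stairCycle, Equiv.trans_apply, Equiv.symm_apply_apply]
  rw [finSucc_finProdFinEquiv, Equiv.symm_apply_apply, stairSucc_shear]
  simp only [finSucc_eq_add_one]

lemma semiconj_swap_stairCycle :
    Function.Semiconj (stairCycle.trans (Equiv.prodComm (Fin n) (Fin n))) finSucc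
      (fun p => (stairSucc p.swap).swap) := by
  intro t
  simp only [Equiv.trans_apply, Equiv.prodComm_apply, Prod.swap_swap, semiconj_stairCycle t]

lemma cartProd_cycleArc_iff (x y : Fin n × Fin n) :
    CartProd (CycleArc n) (CycleArc n) x y ↔ y = stairSucc x ∨ y = (stairSucc x.swap).swap := by
  obtain ⟨a, b⟩ := x
  obtain ⟨c, d⟩ := y
  simp only [CartProd, CycleArc, finSucc_eq_add_one, stairSucc, Prod.swap, add_comm b a]
  split_ifs <;> simp only [Prod.mk.injEq] <;> tauto

lemma stairSucc_ne_swap (hn : 2 ≤ n) (x : Fin n × Fin n) :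
    stairSucc x ≠ (stairSucc x.swap).swap := by
  obtain ⟨a, b⟩ := x
  simp only [stairSucc, Prod.swap, add_comm b a]
  split_ifs
  · exact fun h => Fin.add_one_ne_self hn a (congrArg Prod.fst h)
  · exact fun h => Fin.add_one_ne_self hn a (congrArg Prod.fst h).symm

end StairCycle

theorem stmt_9 (n : ℕ) (hn : 2 ≤ n) :
    ∃ A₁ A₂ : Fin n × Fin n → Fin n × Fin n → Prop,
      (∀ x y, CartProd (CycleArc n) (CycleArc n) x y ↔ (A₁ x y ∨ A₂ x y)) ∧
      (∀ x y, ¬ (A₁ x y ∧ A₂ x y)) ∧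
      (∃ e : Fin (n * n) ≃ Fin n × Fin n, ∀ x y, A₁ (e x) (e y) ↔ y = finSucc x) ∧
      (∃ e : Fin (n * n) ≃ Fin n × Fin n, ∀ x y, A₂ (e x) (e y) ↔ y = finSucc x) := by
  have : NeZero n := ⟨by omega⟩
  refine ⟨fun x y => y = StairCycle.stairSucc x,
    fun x y => y = (StairCycle.stairSucc x.swap).swap,
    StairCycle.cartProd_cycleArc_iff, ?_,
    ⟨_, StairCycle.semiconj_stairCycle.eq_apply_iff_eq_finSucc⟩,
    ⟨_, StairCycle.semiconj_swap_stairCycle.eq_apply_iff_eq_finSucc⟩⟩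
  rintro x y ⟨rfl, h⟩
  exact StairCycle.stairSucc_ne_swap hn x h
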